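/- The function p(z) = exp(−((√(ln z − C) − B)²)/(2A²)) / (2√(2π)·A·z·√(ln z − C)) defined for z > e^C (with A > 0, B ≥ 0, C ∈ ℝ) is nonnegative, measurable, and integrates over (e^C, ∞) to a value at most 1 (equal to the probability P(A·x + B ≥ 0) for x ~ N(0,1)). -/

import Mathlib

open MeasureTheory Real Set

/-- The log-CSχ₁ function
`p(z) = exp(−(√(ln z − C) − B)²/(2A²))/(2√(2π)·A·z·√(ln z − C))` for `z > e^C`
(`A > 0`, `B ≥ 0`) is nonnegative and measurable on `(e^C, ∞)`, and its integral over
`(e^C, ∞)` equals `P(A·x + B ≥ 0)` for `x ~ N(0,1)`, a value at most `1`. -/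
theorem stmt5 (A B C : ℝ) (hA : 0 < A) (hB : 0 ≤ B) :
    Measurable (fun z => Real.exp (-((Real.sqrt (Real.log z - C) - B)^2) / (2 * A^2))
        / (2 * Real.sqrt (2 * π) * A * z * Real.sqrt (Real.log z - C))) ∧
    (∀ z ∈ Ioi (Real.exp C),
      0 ≤ Real.exp (-((Real.sqrt (Real.log z - C) - B)^2) / (2 * A^2))
        / (2 * Real.sqrt (2 * π) * A * z * Real.sqrt (Real.log z - C))) ∧
    (∫ z in Ioi (Real.exp C),
        Real.exp (-((Real.sqrt (Real.log z - C) - B)^2) / (2 * A^2))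
          / (2 * Real.sqrt (2 * π) * A * z * Real.sqrt (Real.log z - C)))
      = (∫ x in Ici (-(B / A)), Real.exp (-(x^2) / 2) / Real.sqrt (2 * π)) ∧
    (∫ z in Ioi (Real.exp C),
        Real.exp (-((Real.sqrt (Real.log z - C) - B)^2) / (2 * A^2))
          / (2 * Real.sqrt (2 * π) * A * z * Real.sqrt (Real.log z - C))) ≤ 1 := by
  have hπ : (0:ℝ) < Real.sqrt (2*π) := Real.sqrt_pos.2 (by positivity)
  have hmeas : Measurable (fun z => Real.exp (-((Real.sqrt (Real.log z - C) - B)^2) / (2 * A^2))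
        / (2 * Real.sqrt (2 * π) * A * z * Real.sqrt (Real.log z - C))) := by
    have h1 : Measurable fun z : ℝ => Real.sqrt (Real.log z - C) :=
      (Real.measurable_log.sub measurable_const).sqrt
    exact ((((h1.sub measurable_const).pow measurable_const).neg.div measurable_const).exp).div
      ((measurable_const.mul measurable_id).mul h1)
  refine ⟨hmeas, ?_, ?_⟩
  · intro z hz
    have hz0 : (0:ℝ) < z := lt_trans (Real.exp_pos C) hz
    positivity
  set f : ℝ → ℝ := fun x => Real.exp ((A*x+B)^2 + C) with hf
  have himg : f '' Ioi (-(B/A)) = Ioi (Real.exp C) := by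
    ext z
    constructor
    · rintro ⟨x, hx, rfl⟩
      have hx' : 0 < A*x+B := by
        have := (mem_Ioi.1 hx)
        have : -(B/A) < x := this
        nlinarith [mul_pos hA (show 0 < x + B/A by linarith), mul_div_cancel₀ B hA.ne']
      exact Real.exp_lt_exp.2 (by nlinarith)
    · intro hz
      have hz0 : (0:ℝ) < z := lt_trans (Real.exp_pos C) hz
      have hlog : 0 < Real.log z - C := by
        have := (Real.lt_log_iff_exp_lt hz0).2 hz
        linarith
      refine ⟨(Real.sqrt (Real.log z - C) - B)/A, ?_, ?_⟩
      · have hs : 0 < Real.sqrt (Real.log z - C) := Real.sqrt_pos.2 hlog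
        rw [mem_Ioi, lt_div_iff₀ hA]
        nlinarith [mul_div_cancel₀ B hA.ne', hs]
      · have : A * ((Real.sqrt (Real.log z - C) - B)/A) + B = Real.sqrt (Real.log z - C) := by
          field_simp
          ring
        rw [hf]
        simp only [this, Real.sq_sqrt hlog.le]
        rw [sub_add_cancel, Real.exp_log hz0]
  have hderiv : ∀ x ∈ Ioi (-(B/A)), HasDerivWithinAt f (Real.exp ((A*x+B)^2 + C) * (2*(A*x+B)*A)) (Ioi (-(B/A))) x := by
    intro x hx
    have h1 : HasDerivAt (fun x => (A*x+B)^2 + C) (2*(A*x+B)*A) x := by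
      have : HasDerivAt (fun x : ℝ => A*x+B) A x := by
        simpa using ((hasDerivAt_id x).const_mul A).add_const B
      simpa using (this.pow 2).add_const C
    exact (h1.exp).hasDerivWithinAt
  have hpos : ∀ x ∈ Ioi (-(B/A)), 0 < A*x+B := by
    intro x hx
    have : -(B/A) < x := hx
    nlinarith [mul_pos hA (show 0 < x + B/A by linarith), mul_div_cancel₀ B hA.ne']
  have hinj : InjOn f (Ioi (-(B/A))) := by
    have hmono : StrictMonoOn f (Ioi (-(B/A))) := by
      intro x hx y hy hxy
      have hx' := hpos x hx
      have hy' := hpos y hy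
      have h1 : A*x+B < A*y+B := by nlinarith
      have h2 : (A*x+B)^2 < (A*y+B)^2 := by nlinarith [mul_self_lt_mul_self hx'.le h1]
      exact Real.exp_lt_exp.2 (by linarith)
    exact hmono.injOn
  have key : (∫ z in Ioi (Real.exp C),
        Real.exp (-((Real.sqrt (Real.log z - C) - B)^2) / (2 * A^2))
          / (2 * Real.sqrt (2 * π) * A * z * Real.sqrt (Real.log z - C)))
      = ∫ x in Ioi (-(B/A)), Real.exp (-(x^2) / 2) / Real.sqrt (2 * π) := by
    rw [← himg,
      integral_image_eq_integral_abs_deriv_smul measurableSet_Ioi hderiv hinj]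
    apply setIntegral_congr_fun measurableSet_Ioi
    intro x hx
    have hx' := hpos x hx
    have hfx : 0 < f x := Real.exp_pos _
    have hlog : Real.log (f x) - C = (A*x+B)^2 := by
      rw [hf]; simp [Real.log_exp]
    have hsq : Real.sqrt (Real.log (f x) - C) = A*x+B := by
      rw [hlog, Real.sqrt_sq hx'.le]
    have hnum : -((A*x+B - B)^2) / (2*A^2) = -(x^2)/2 := by
      have : (A*x+B-B)^2 = A^2 * x^2 := by ring
      rw [this]
      field_simp
    simp only [smul_eq_mul, hsq, hnum]
    rw [abs_of_pos (mul_pos hfx (by positivity))]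
    have hden : 2 * Real.sqrt (2*π) * A * f x * (A*x+B) ≠ 0 := by
      have := hfx
      positivity
    rw [← mul_div_assoc, div_eq_div_iff hden hπ.ne']
    ring
  rw [key]
  have hIci : (∫ x in Ici (-(B/A)), Real.exp (-(x^2) / 2) / Real.sqrt (2 * π))
      = ∫ x in Ioi (-(B/A)), Real.exp (-(x^2) / 2) / Real.sqrt (2 * π) :=
    integral_Ici_eq_integral_Ioi
  refine ⟨hIci.symm, ?_⟩
  have hint : Integrable (fun x : ℝ => Real.exp (-(x^2)/2) / Real.sqrt (2*π)) := by
    have h := integrable_exp_neg_mul_sq (show (0:ℝ) < 1/2 by norm_num)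
    have heq : (fun x : ℝ => Real.exp (-(x^2)/2)) = fun x => Real.exp (-(1/2) * x^2) := by
      funext x; ring_nf
    exact (heq ▸ h).div_const _
  have htot : (∫ x : ℝ, Real.exp (-(x^2)/2) / Real.sqrt (2*π)) = 1 := by
    rw [integral_div]
    have heq : (fun x : ℝ => Real.exp (-(x^2)/2)) = fun x => Real.exp (-(1/2) * x^2) := by
      funext x; ring_nf
    rw [heq, integral_gaussian]
    rw [show π / (1/2 : ℝ) = 2*π by ring]
    exact div_self hπ.ne'
  calc (∫ x in Ioi (-(B/A)), Real.exp (-(x^2) / 2) / Real.sqrt (2 * π))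
      ≤ ∫ x : ℝ, Real.exp (-(x^2)/2) / Real.sqrt (2*π) := by
        apply setIntegral_le_integral hint
        filter_upwards with x
        positivity
    _ = 1 := htot
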